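/- Let C = ln 4/(ln 4 − 1). If G is a graph on n vertices with minimum degree at least δ ≥ 1, where n ≥ (C−1)δ² + (3C−1)δ + 2, then either G = K_{δ,n−δ} or i(G) < i(K_{δ,n−δ}), where i(G) = Σ_t i_t(G) is the total number of independent sets (including the empty set). -/

import Mathlib

/-- A finset of vertices is independent: no edge inside. -/
def SimpleGraph.IsIndepFinset {V : Type*} (G : SimpleGraph V) (s : Finset V) : Prop :=
  ∀ v ∈ s, ∀ w ∈ s, ¬ G.Adj v w

/-- `indepCount G t` = number of independent sets of size `t` in `G`. -/
noncomputable def indepCount {V : Type*} [Fintype V] (G : SimpleGraph V) (t : ℕ) : ℕ :=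
  Nat.card {s : Finset V // s.card = t ∧ G.IsIndepFinset s}

/-- `indepTotal G` = total number of independent sets in `G` (including ∅). -/
noncomputable def indepTotal {V : Type*} [Fintype V] (G : SimpleGraph V) : ℕ :=
  Nat.card {s : Finset V // G.IsIndepFinset s}

open Classical in
/-- The independence polynomial `P(G,x) = Σ_t i_t(G) xᵗ`. -/
noncomputable def indPoly {V : Type*} [Fintype V] (G : SimpleGraph V) (x : ℝ) : ℝ :=
  ∑ s ∈ Finset.univ.filter (fun s : Finset V => G.IsIndepFinset s), x ^ s.card

open Finset

/-!
Let `A` be a maximum independent set and `B = Aᶜ`. Every vertex of `A` has all of its at least `δ`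
neighbours in `B`, so `|B| ≥ δ`.

If `|B| = δ`, every vertex of `A` is joined to all of `B`, so every independent set lies inside `A`
or inside `B`: either `B` is independent and `G` is `K_{δ,n-δ}`, or `B` itself is not counted.

If `|B| > δ`, we show `i(G) ≤ 2^(n-δ)`. When `|A| ≤ δ + 1` this follows from
`i(G) ≤ (δ+2)·binom(n, δ+1)`, because `C ≥ 3` gives `n ≥ (δ+2)(δ+3)` and hence `n^(δ+2) ≤ 2^n`.
Otherwise, an independent set `I` with `I ∩ A = T` is `T` together with a subset of `B \ N(T)`.
For nonempty `T`, `|N(T)| ≥ δ + 1` unless all vertices of `T` share one neighbourhood of size `δ`;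
as `N(A) ⊇ B` by maximality, no such twin class is all of `A`, so these exceptional `T` make up
at most `2^(|A|-1)` of the subsets of `A`, and the sum of `2^|B \ N(T)|` is at most `2^(n-δ)`.
-/

namespace Nat

lemma mul_add_two_le_two_pow_succ (q : ℕ) : q * (q + 2) ≤ 2 ^ (q + 1) := by
  induction q with
  | zero => simp
  | succ q ih =>
    rw [pow_succ]
    rcases q with _ | _ | q
    · norm_num
    · norm_num
    · nlinarith

lemma pow_le_two_pow_of_mul_succ_le {m n : ℕ} (h : m * (m + 1) ≤ n) : n ^ m ≤ 2 ^ n := by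
  rcases m.eq_zero_or_pos with rfl | hm
  · simp [Nat.one_le_two_pow]
  set q := n / m
  have hmq : m + 1 ≤ q := (Nat.le_div_iff_mul_le hm).2 (by linarith)
  have hbase : m * (q + 1) ≤ 2 ^ q := by
    obtain ⟨p, hp⟩ : ∃ p, q = p + 1 := ⟨q - 1, by omega⟩
    rw [hp]
    calc m * (p + 1 + 1) ≤ p * (p + 2) := Nat.mul_le_mul (by omega) le_rfl
      _ ≤ 2 ^ (p + 1) := mul_add_two_le_two_pow_succ p
  calc n ^ m ≤ (m * (q + 1)) ^ m := Nat.pow_le_pow_left (Nat.lt_mul_div_succ n hm).le m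
    _ ≤ (2 ^ q) ^ m := Nat.pow_le_pow_left hbase m
    _ = 2 ^ (q * m) := (pow_mul 2 q m).symm
    _ ≤ 2 ^ n := Nat.pow_le_pow_right two_pos (Nat.div_mul_le_self n m)

lemma choose_le_choose_of_le_half {n j k : ℕ} (hjk : j ≤ k) (hk : k ≤ n / 2) :
    n.choose j ≤ n.choose k := by
  induction k, hjk using Nat.le_induction with
  | base => rfl
  | succ k hjk ih => exact (ih (by omega)).trans (Nat.choose_le_succ_of_lt_half_left (by omega))

lemma add_two_mul_choose_add_one_le_two_pow {n d : ℕ} (h : (d + 2) * (d + 3) ≤ n) :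
    (d + 2) * n.choose (d + 1) ≤ 2 ^ (n - d) := by
  have hfact : 2 ^ d ≤ (d + 1)! := by
    simpa [add_comm] using Nat.factorial_mul_pow_le_factorial (m := 1) (n := d)
  have hdesc : (d + 1)! * n.choose (d + 1) ≤ n ^ (d + 1) :=
    (Nat.descFactorial_eq_factorial_mul_choose n (d + 1)).symm.trans_le
      (Nat.descFactorial_le_pow n (d + 1))
  refine Nat.le_of_mul_le_mul_right ?_ (Nat.two_pow_pos d)
  calc (d + 2) * n.choose (d + 1) * 2 ^ d ≤ (d + 2) * ((d + 1)! * n.choose (d + 1)) := by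
        rw [mul_comm ((d + 1)!), ← mul_assoc]; exact Nat.mul_le_mul_left _ hfact
    _ ≤ n * n ^ (d + 1) := Nat.mul_le_mul (by nlinarith) hdesc
    _ = n ^ (d + 2) := by ring
    _ ≤ 2 ^ n := pow_le_two_pow_of_mul_succ_le h
    _ = 2 ^ (n - d) * 2 ^ d := by rw [← pow_add, Nat.sub_add_cancel (by nlinarith)]

lemma two_pow_sub_one_add_two_pow_sub_one_le {x y : ℕ} (hx : 1 ≤ x) (hy : 1 ≤ y) :
    (2 ^ x - 1) + (2 ^ y - 1) ≤ 2 ^ (x + y - 1) := by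
  obtain ⟨x, rfl⟩ := Nat.exists_eq_add_of_le' hx
  obtain ⟨y, rfl⟩ := Nat.exists_eq_add_of_le' hy
  have hX : 1 ≤ 2 ^ x := Nat.one_le_two_pow
  have hY : 1 ≤ 2 ^ y := Nat.one_le_two_pow
  have h : 2 ^ x + 2 ^ y ≤ 2 ^ x * 2 ^ y + 1 := by nlinarith
  have e : 2 ^ (x + 1 + (y + 1) - 1) = 2 * (2 ^ x * 2 ^ y) := by
    rw [show x + 1 + (y + 1) - 1 = x + y + 1 by omega, pow_succ, pow_add, mul_comm]
  rw [e, pow_succ, pow_succ]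
  omega

end Nat

lemma three_le_log_four_div : 3 ≤ Real.log 4 / (Real.log 4 - 1) := by
  have h4 : Real.log 4 = 2 * Real.log 2 := by
    rw [show (4 : ℝ) = 2 ^ 2 by norm_num, Real.log_pow]; norm_num
  have := Real.log_two_lt_d9
  have := Real.log_two_gt_d9
  rw [le_div_iff₀ (by linarith)]
  linarith

namespace SimpleGraph

variable {V : Type*} (G : SimpleGraph V)

instance [DecidableRel G.Adj] : DecidablePred G.IsIndepFinset := fun s =>
  inferInstanceAs (Decidable (∀ v ∈ s, ∀ w ∈ s, ¬ G.Adj v w))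

def neighborFinsetOf [Fintype V] [DecidableRel G.Adj] [DecidableEq V] (T : Finset V) :
    Finset V :=
  T.biUnion fun v => G.neighborFinset v

def indepFinsets [Fintype V] [DecidableRel G.Adj] : Finset (Finset V) :=
  univ.filter G.IsIndepFinset

variable {G}

lemma IsIndepFinset.insert [DecidableEq V] {s : Finset V} {v : V} (hs : G.IsIndepFinset s)
    (hv : ∀ u ∈ s, ¬ G.Adj v u) : G.IsIndepFinset (insert v s) := by
  intro x hx y hy
  rw [mem_insert] at hx hy
  rcases hx with rfl | hx <;> rcases hy with rfl | hy
  · exact G.irrefl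
  · exact hv y hy
  · exact fun h => hv x hx h.symm
  · exact hs x hx y hy

lemma exists_adj_of_forall_card_le [DecidableEq V] {A : Finset V} (hA : G.IsIndepFinset A)
    (hmax : ∀ I, G.IsIndepFinset I → #I ≤ #A) {v : V} (hv : v ∉ A) : ∃ u ∈ A, G.Adj u v := by
  by_contra! h
  have := hmax _ (hA.insert fun u hu huv => h u hu huv.symm)
  rw [card_insert_of_notMem hv] at this
  omega

section Fintype

variable [Fintype V] [DecidableRel G.Adj]

lemma indepTotal_eq_card_indepFinsets : indepTotal G = #G.indepFinsets := by
  rw [indepTotal, Nat.card_eq_fintype_card, Fintype.card_subtype, indepFinsets]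

lemma mem_indepFinsets {s : Finset V} : s ∈ G.indepFinsets ↔ G.IsIndepFinset s := by
  simp [indepFinsets]

lemma exists_isIndepFinset_forall_card_le :
    ∃ A, G.IsIndepFinset A ∧ ∀ I, G.IsIndepFinset I → #I ≤ #A := by
  obtain ⟨A, hA, hmax⟩ := G.indepFinsets.exists_max_image card
    ⟨∅, mem_indepFinsets.2 fun v hv => absurd hv (notMem_empty v)⟩
  exact ⟨A, mem_indepFinsets.1 hA, fun I hI => hmax I (mem_indepFinsets.2 hI)⟩

variable [DecidableEq V] {A T : Finset V} {δ : ℕ}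

lemma neighborFinset_subset_neighborFinsetOf {u : V} (hu : u ∈ T) :
    G.neighborFinset u ⊆ G.neighborFinsetOf T :=
  subset_biUnion_of_mem (fun v => G.neighborFinset v) hu

lemma neighborFinset_subset_compl (hA : G.IsIndepFinset A) {u : V} (hu : u ∈ A) :
    G.neighborFinset u ⊆ Aᶜ := fun v hv =>
  mem_compl.2 fun hvA => hA u hu v hvA ((G.mem_neighborFinset u v).1 hv)

lemma neighborFinsetOf_subset_compl (hA : G.IsIndepFinset A) (hT : T ⊆ A) :
    G.neighborFinsetOf T ⊆ Aᶜ :=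
  biUnion_subset.2 fun _ hu => neighborFinset_subset_compl hA (hT hu)

lemma neighborFinset_eq_compl_of_card_compl_le (hA : G.IsIndepFinset A)
    (hdeg : ∀ v, δ ≤ G.degree v) (h : #Aᶜ ≤ δ) {u : V} (hu : u ∈ A) :
    G.neighborFinset u = Aᶜ :=
  eq_of_subset_of_card_le (neighborFinset_subset_compl hA hu)
    (h.trans ((hdeg u).trans (G.card_neighborFinset_eq_degree u).ge))

lemma le_card_neighborFinsetOf (hdeg : ∀ v, δ ≤ G.degree v) (hT : T.Nonempty) :
    δ ≤ #(G.neighborFinsetOf T) := by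
  obtain ⟨u, hu⟩ := hT
  exact (hdeg u).trans ((G.card_neighborFinset_eq_degree u).symm.trans_le
    (card_le_card (neighborFinset_subset_neighborFinsetOf hu)))

lemma neighborFinset_eq_of_card_neighborFinsetOf_le (hdeg : ∀ v, δ ≤ G.degree v)
    (hT : #(G.neighborFinsetOf T) ≤ δ) {u : V} (hu : u ∈ T) :
    G.neighborFinset u = G.neighborFinsetOf T :=
  eq_of_subset_of_card_le (neighborFinset_subset_neighborFinsetOf hu)
    (hT.trans ((hdeg u).trans (G.card_neighborFinset_eq_degree u).ge))

lemma card_filter_inter_eq_le :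
    #{I ∈ G.indepFinsets | I ∩ A = T} ≤ 2 ^ #(Aᶜ \ G.neighborFinsetOf T) := by
  rw [← card_powerset]
  refine card_le_card_of_injOn (· \ A) (fun I hI => ?_) (fun I₁ hI₁ I₂ hI₂ h => ?_)
  · simp only [mem_coe, mem_filter, mem_indepFinsets] at hI
    obtain ⟨hI, rfl⟩ := hI
    refine mem_powerset.2 fun v hv => ?_
    obtain ⟨hvI, hvA⟩ := mem_sdiff.1 hv
    refine mem_sdiff.2 ⟨mem_compl.2 hvA, fun hvN => ?_⟩
    obtain ⟨u, hu, huv⟩ := mem_biUnion.1 hvN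
    exact hI u (mem_inter.1 hu).1 v hvI ((G.mem_neighborFinset u v).1 huv)
  · simp only [mem_coe, mem_filter] at hI₁ hI₂
    rw [← sdiff_union_inter I₁ A, ← sdiff_union_inter I₂ A, hI₁.2, hI₂.2]
    exact congrArg (· ∪ T) h

lemma card_indepFinsets_le_sum :
    #G.indepFinsets ≤ ∑ T ∈ A.powerset, 2 ^ #(Aᶜ \ G.neighborFinsetOf T) := by
  rw [card_eq_sum_card_fiberwise (f := (· ∩ A)) fun I _ => mem_powerset.2 inter_subset_right]
  exact sum_le_sum fun T _ => card_filter_inter_eq_le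

lemma nonempty_iso_completeBipartiteGraph (hB : G.IsIndepFinset Aᶜ)
    (hN : ∀ u ∈ A, G.neighborFinset u = Aᶜ) :
    Nonempty (G ≃g completeBipartiteGraph (Fin #Aᶜ) (Fin #A)) := by
  have hadj : ∀ v w, G.Adj v w ↔ (v ∈ A ↔ w ∉ A) := by
    intro v w
    by_cases hv : v ∈ A
    · rw [← mem_neighborFinset, hN v hv, mem_compl]
      simp [hv]
    by_cases hw : w ∈ A
    · rw [adj_comm, ← mem_neighborFinset, hN w hw, mem_compl]
      simp [hv, hw]
    · simpa [hv, hw] using hB v (mem_compl.2 hv) w (mem_compl.2 hw)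
  let e : completeBipartiteGraph {v // v ∉ A} {v // ¬ v ∉ A} ≃g G :=
    ⟨Equiv.sumCompl (· ∉ A), by
      rintro (⟨v, hv⟩ | ⟨v, hv⟩) (⟨w, hw⟩ | ⟨w, hw⟩) <;> simp [hadj] <;> tauto⟩
  refine ⟨e.symm.trans (completeBipartiteGraphCongr (Fintype.equivFinOfCardEq ?_)
    (Fintype.equivFinOfCardEq ?_))⟩
  · rw [Fintype.card_subtype, filter_not, filter_mem_eq_inter, univ_inter, compl_eq_univ_sdiff]
  · simp [Fintype.card_subtype]

lemma card_indepFinsets_le_of_neighborFinset_eq_compl (hN : ∀ u ∈ A, G.neighborFinset u = Aᶜ)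
    (hB : ¬ G.IsIndepFinset Aᶜ) :
    #G.indepFinsets ≤ (2 ^ #A - 1) + (2 ^ #Aᶜ - 1) := by
  have hsub : G.indepFinsets ⊆ A.powerset.erase ∅ ∪ Aᶜ.powerset.erase Aᶜ := by
    intro I hI
    rw [mem_indepFinsets] at hI
    by_cases hIB : I ⊆ Aᶜ
    · exact mem_union_right _ (mem_erase.2 ⟨fun h => hB (h ▸ hI), mem_powerset.2 hIB⟩)
    obtain ⟨u, huI, huA⟩ : ∃ u ∈ I, u ∈ A := by
      simpa [subset_iff] using hIB
    refine mem_union_left _ (mem_erase.2 ⟨ne_empty_of_mem huI, mem_powerset.2 fun v hv => ?_⟩)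
    by_contra hvA
    rw [← mem_compl, ← hN u huA, mem_neighborFinset] at hvA
    exact hI u huI v hv hvA
  calc #G.indepFinsets ≤ #(A.powerset.erase ∅) + #(Aᶜ.powerset.erase Aᶜ) :=
        (card_le_card hsub).trans (card_union_le _ _)
    _ = (2 ^ #A - 1) + (2 ^ #Aᶜ - 1) := by
        rw [card_erase_of_mem (empty_mem_powerset A), card_erase_of_mem (mem_powerset_self Aᶜ),
          card_powerset, card_powerset]

lemma card_indepFinsets_le_of_forall_card_le {k : ℕ} (hk : 2 * k ≤ Fintype.card V)
    (h : ∀ I, G.IsIndepFinset I → #I ≤ k) :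
    #G.indepFinsets ≤ (k + 1) * (Fintype.card V).choose k := by
  have hsub : G.indepFinsets ⊆ (range (k + 1)).biUnion fun t => powersetCard t univ := fun I hI =>
    mem_biUnion.2 ⟨#I, mem_range.2 (Nat.lt_succ_of_le (h I (mem_indepFinsets.1 hI))),
      mem_powersetCard.2 ⟨subset_univ I, rfl⟩⟩
  calc #G.indepFinsets ≤ ∑ t ∈ range (k + 1), #(powersetCard t (univ : Finset V)) :=
        (card_le_card hsub).trans card_biUnion_le
    _ ≤ ∑ _t ∈ range (k + 1), (Fintype.card V).choose k := by
        refine sum_le_sum fun t ht => ?_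
        rw [card_powersetCard, card_univ]
        exact Nat.choose_le_choose_of_le_half (Nat.lt_succ_iff.1 (mem_range.1 ht))
          ((Nat.le_div_iff_mul_le two_pos).2 (by omega))
    _ = (k + 1) * (Fintype.card V).choose k := by rw [sum_const, card_range, smul_eq_mul]

lemma card_filter_card_neighborFinsetOf_le (hdeg : ∀ v, δ ≤ G.degree v)
    (hcover : ∀ v ∉ A, ∃ u ∈ A, G.Adj u v) (hδ : δ < #Aᶜ) :
    #{T ∈ A.powerset.erase ∅ | #(G.neighborFinsetOf T) ≤ δ} ≤ 2 ^ (#A - 1) := by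
  set 𝒯 := {T ∈ A.powerset.erase ∅ | #(G.neighborFinsetOf T) ≤ δ}
  rcases 𝒯.eq_empty_or_nonempty with h𝒯 | ⟨T₀, hT₀⟩
  · simp [h𝒯]
  simp only [𝒯, mem_filter, mem_erase, mem_powerset] at hT₀
  obtain ⟨⟨hT₀ne, hT₀A⟩, hT₀δ⟩ := hT₀
  obtain ⟨x, hx⟩ := nonempty_iff_ne_empty.2 hT₀ne
  set P := {u ∈ A | G.neighborFinset u = G.neighborFinset x}
  have hxP : x ∈ P := mem_filter.2 ⟨hT₀A hx, rfl⟩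
  have hPA : P ⊂ A := by
    refine Finset.ssubset_iff_subset_ne.2 ⟨filter_subset _ _, fun hPA => hδ.not_ge ?_⟩
    have hcompl : Aᶜ ⊆ G.neighborFinset x := fun v hv => by
      obtain ⟨u, hu, huv⟩ := hcover v (mem_compl.1 hv)
      rw [← (mem_filter.1 (hPA ▸ hu : u ∈ P)).2, mem_neighborFinset]
      exact huv
    rw [neighborFinset_eq_of_card_neighborFinsetOf_le hdeg hT₀δ hx] at hcompl
    exact (card_le_card hcompl).trans hT₀δ
  have hsplit : 𝒯 ⊆ P.powerset.erase ∅ ∪ (A \ P).powerset.erase ∅ := by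
    intro T hT
    simp only [𝒯, mem_filter, mem_erase, mem_powerset] at hT
    obtain ⟨⟨hTne, hTA⟩, hTδ⟩ := hT
    have hN := fun {u} => neighborFinset_eq_of_card_neighborFinsetOf_le hdeg hTδ (u := u)
    by_cases hTP : ∃ u ∈ T, u ∈ P
    · obtain ⟨u, huT, huP⟩ := hTP
      refine mem_union_left _ (mem_erase.2 ⟨hTne, mem_powerset.2 fun v hv => ?_⟩)
      exact mem_filter.2 ⟨hTA hv, (hN hv).trans ((hN huT).symm.trans (mem_filter.1 huP).2)⟩
    · push Not at hTP
      exact mem_union_right _ (mem_erase.2 ⟨hTne, mem_powerset.2 fun v hv =>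
        mem_sdiff.2 ⟨hTA hv, hTP v hv⟩⟩)
  have hcard : #P + #(A \ P) = #A := by rw [add_comm, card_sdiff_add_card_eq_card hPA.subset]
  calc #𝒯 ≤ (2 ^ #P - 1) + (2 ^ #(A \ P) - 1) := by
        refine (card_le_card hsplit).trans ((card_union_le _ _).trans_eq ?_)
        rw [card_erase_of_mem (empty_mem_powerset _), card_erase_of_mem (empty_mem_powerset _),
          card_powerset, card_powerset]
    _ ≤ 2 ^ (#A - 1) := by
        rw [← hcard]
        exact Nat.two_pow_sub_one_add_two_pow_sub_one_le (card_pos.2 ⟨x, hxP⟩)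
          (card_pos.2 (sdiff_nonempty.2 (not_subset_of_ssubset hPA)))

lemma card_indepFinsets_le_of_lt_card_compl_of_lt_card (hA : G.IsIndepFinset A)
    (hdeg : ∀ v, δ ≤ G.degree v) (hcover : ∀ v ∉ A, ∃ u ∈ A, G.Adj u v) (hδ : δ < #Aᶜ)
    (ha : δ + 1 < #A) :
    #G.indepFinsets ≤ 2 ^ (Fintype.card V - δ) := by
  obtain ⟨c, hc⟩ : ∃ c, #Aᶜ = δ + 1 + c := ⟨#Aᶜ - (δ + 1), by omega⟩
  set M := #{T ∈ A.powerset.erase ∅ | #(G.neighborFinsetOf T) ≤ δ}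
  have hterm : ∀ T ∈ A.powerset.erase ∅, 2 ^ #(Aᶜ \ G.neighborFinsetOf T) ≤
      2 ^ c + if #(G.neighborFinsetOf T) ≤ δ then 2 ^ c else 0 := by
    intro T hT
    obtain ⟨hTne, hTA⟩ := mem_erase.1 hT
    have hNδ := le_card_neighborFinsetOf hdeg (nonempty_iff_ne_empty.2 hTne)
    rw [card_sdiff_of_subset (neighborFinsetOf_subset_compl hA (mem_powerset.1 hTA)), hc]
    split_ifs with h
    · rw [← two_mul, ← pow_succ']
      exact Nat.pow_le_pow_right two_pos (by omega)
    · exact Nat.pow_le_pow_right two_pos (by omega)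
  have hM : M ≤ 2 ^ (#A - 1) := card_filter_card_neighborFinsetOf_le hdeg hcover hδ
  have hδA : 2 ^ (δ + 1) ≤ 2 ^ (#A - 1) := Nat.pow_le_pow_right two_pos (by omega)
  have hA2 : 2 ^ #A = 2 * 2 ^ (#A - 1) := by rw [← pow_succ']; congr 1; omega
  have hn : Fintype.card V - δ = 2 + (#A - 1) + c := by
    rw [← card_add_card_compl A]; omega
  calc #G.indepFinsets ≤ ∑ T ∈ A.powerset, 2 ^ #(Aᶜ \ G.neighborFinsetOf T) :=
        card_indepFinsets_le_sum
    _ = 2 ^ #Aᶜ + ∑ T ∈ A.powerset.erase ∅, 2 ^ #(Aᶜ \ G.neighborFinsetOf T) := by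
        rw [← add_sum_erase _ _ (empty_mem_powerset A)]
        simp [neighborFinsetOf]
    _ ≤ 2 ^ #Aᶜ + ∑ T ∈ A.powerset.erase ∅,
          (2 ^ c + if #(G.neighborFinsetOf T) ≤ δ then 2 ^ c else 0) := by
        gcongr with T hT
        exact hterm T hT
    _ = 2 ^ (δ + 1) * 2 ^ c + #(A.powerset.erase ∅) * 2 ^ c + M * 2 ^ c := by
        rw [sum_add_distrib, ← sum_filter, sum_const, sum_const, smul_eq_mul, smul_eq_mul, hc,
          pow_add, add_assoc]
    _ ≤ 2 ^ (#A - 1) * 2 ^ c + 2 ^ #A * 2 ^ c + 2 ^ (#A - 1) * 2 ^ c := by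
        gcongr
        exact (card_erase_le).trans (card_powerset A).le
    _ = 2 ^ (Fintype.card V - δ) := by
        rw [hn, hA2, pow_add, pow_add]
        ring

lemma card_indepFinsets_le_of_lt_card_compl (hA : G.IsIndepFinset A)
    (hmax : ∀ I, G.IsIndepFinset I → #I ≤ #A) (hdeg : ∀ v, δ ≤ G.degree v) (hδ : δ < #Aᶜ)
    (hn : (δ + 2) * (δ + 3) ≤ Fintype.card V) :
    #G.indepFinsets ≤ 2 ^ (Fintype.card V - δ) := by
  rcases le_or_gt #A (δ + 1) with ha | ha
  · exact (card_indepFinsets_le_of_forall_card_le (by nlinarith)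
      fun I hI => (hmax I hI).trans ha).trans (Nat.add_two_mul_choose_add_one_le_two_pow hn)
  · exact card_indepFinsets_le_of_lt_card_compl_of_lt_card hA hdeg
      (fun _ => exists_adj_of_forall_card_le hA hmax) hδ ha

lemma nonempty_iso_or_card_indepFinsets_lt (hA : G.IsIndepFinset A)
    (hdeg : ∀ v, δ ≤ G.degree v) (h : #Aᶜ ≤ δ) :
    Nonempty (G ≃g completeBipartiteGraph (Fin #Aᶜ) (Fin #A)) ∨
      #G.indepFinsets < 2 ^ #Aᶜ + 2 ^ #A - 1 := by
  have hN := fun u => neighborFinset_eq_compl_of_card_compl_le hA hdeg h (u := u)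
  by_cases hB : G.IsIndepFinset Aᶜ
  · exact .inl (nonempty_iso_completeBipartiteGraph hB hN)
  · have := card_indepFinsets_le_of_neighborFinset_eq_compl hN hB
    have := Nat.one_le_two_pow (n := #A)
    have := Nat.one_le_two_pow (n := #Aᶜ)
    exact .inr (by omega)

lemma le_card_compl_of_forall_card_le [Nonempty V] (hA : G.IsIndepFinset A)
    (hmax : ∀ I, G.IsIndepFinset I → #I ≤ #A) (hdeg : ∀ v, δ ≤ G.degree v) : δ ≤ #Aᶜ := by
  obtain ⟨u, hu⟩ : A.Nonempty := by
    obtain ⟨v⟩ := ‹Nonempty V›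
    by_cases hv : v ∈ A
    exacts [⟨v, hv⟩, (exists_adj_of_forall_card_le hA hmax hv).imp fun _ h => h.1]
  calc δ ≤ G.degree u := hdeg u
    _ = #(G.neighborFinset u) := (G.card_neighborFinset_eq_degree u).symm
    _ ≤ #Aᶜ := card_le_card (neighborFinset_subset_compl hA hu)

end Fintype

section CompleteBipartite

variable {α β : Type*}

lemma isIndepFinset_completeBipartiteGraph_iff {s : Finset (α ⊕ β)} :
    (completeBipartiteGraph α β).IsIndepFinset s ↔ s.toLeft = ∅ ∨ s.toRight = ∅ := by
  simp only [IsIndepFinset, completeBipartiteGraph_adj, eq_empty_iff_forall_notMem, mem_toLeft,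
    mem_toRight, Sum.forall, Sum.isLeft_inl, Sum.isRight_inr, Sum.isLeft_inr, Sum.isRight_inl]
  grind

lemma indepTotal_completeBipartiteGraph [Fintype α] [Fintype β] :
    indepTotal (completeBipartiteGraph α β) = 2 ^ Fintype.card α + 2 ^ Fintype.card β - 1 := by
  classical
  set L := univ.image fun s : Finset α => s.disjSum (∅ : Finset β)
  set R := univ.image fun t : Finset β => (∅ : Finset α).disjSum t
  have hmemL : ∀ u, u ∈ L ↔ u.toRight = ∅ := fun u => by
    simp only [L, mem_image, mem_univ, true_and, disjSum_eq_iff]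
    exact ⟨fun ⟨_, _, h⟩ => h.symm, fun h => ⟨_, rfl, h.symm⟩⟩
  have hmemR : ∀ u, u ∈ R ↔ u.toLeft = ∅ := fun u => by
    simp only [R, mem_image, mem_univ, true_and, disjSum_eq_iff]
    exact ⟨fun ⟨_, h, _⟩ => h.symm, fun h => ⟨_, h.symm, rfl⟩⟩
  have hunion : (completeBipartiteGraph α β).indepFinsets = L ∪ R := by
    ext u
    rw [mem_indepFinsets, isIndepFinset_completeBipartiteGraph_iff, mem_union, hmemL, hmemR, or_comm]
  have hinter : L ∩ R = {∅} := by
    ext u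
    rw [mem_inter, hmemL, hmemR, mem_singleton, and_comm, ← toLeft_disjSum_toRight (u := u)]
    simp
  have hL : #L = 2 ^ Fintype.card α := by
    rw [card_image_of_injective _ fun s t h => (disjSum_inj.1 h).1, card_univ, Fintype.card_finset]
  have hR : #R = 2 ^ Fintype.card β := by
    rw [card_image_of_injective _ fun s t h => (disjSum_inj.1 h).2, card_univ, Fintype.card_finset]
  have := card_union_add_card_inter L R
  rw [indepTotal_eq_card_indepFinsets, hunion]
  rw [hinter, hL, hR, card_singleton] at this
  omega

end CompleteBipartite

end SimpleGraph

open SimpleGraph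

theorem main_count_bound {V : Type*} [Fintype V] (G : SimpleGraph V) [DecidableRel G.Adj]
    (n δ : ℕ) (hcard : Fintype.card V = n) (hδ : 1 ≤ δ)
    (hn : (Real.log 4 / (Real.log 4 - 1) - 1) * (δ : ℝ) ^ 2
        + (3 * (Real.log 4 / (Real.log 4 - 1)) - 1) * δ + 2 ≤ (n : ℝ))
    (hdeg : ∀ v : V, δ ≤ G.degree v) :
    Nonempty (G ≃g completeBipartiteGraph (Fin δ) (Fin (n - δ))) ∨
      indepTotal G < indepTotal (completeBipartiteGraph (Fin δ) (Fin (n - δ))) := by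
  classical
  have hsize : (δ + 2) * (δ + 3) ≤ n := by
    have hδ' : (1 : ℝ) ≤ δ := by exact_mod_cast hδ
    have := three_le_log_four_div
    exact_mod_cast (show ((δ + 2) * (δ + 3) : ℝ) ≤ n by nlinarith)
  subst hcard
  have : Nonempty V := Fintype.card_pos_iff.1 (by nlinarith)
  obtain ⟨A, hA, hmax⟩ := G.exists_isIndepFinset_forall_card_le
  have hsplit : #A + #Aᶜ = Fintype.card V := card_add_card_compl A
  rw [indepTotal_completeBipartiteGraph, indepTotal_eq_card_indepFinsets, Fintype.card_fin,
    Fintype.card_fin]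
  rcases (le_card_compl_of_forall_card_le hA hmax hdeg).eq_or_lt with hδA | hδA
  · subst hδA
    rw [show Fintype.card V - #Aᶜ = #A by omega]
    exact nonempty_iso_or_card_indepFinsets_lt hA hdeg le_rfl
  · have := card_indepFinsets_le_of_lt_card_compl hA hmax hdeg hδA hsize
    have := Nat.pow_le_pow_right two_pos hδ
    exact .inr (by omega)
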